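/- For n-qubit unitaries U and V, letting dist(U,V) = min_{θ ∈ [0,2π)} ‖U − e^{iθ}V‖₂ / √(2N) and D(Φ_U, Φ_V) = ‖J(Φ_U) − J(Φ_V)‖₂ / (N√2), it holds that dist(U,V) ≤ D(Φ_U, Φ_V) ≤ √2 · dist(U,V). -/

import Mathlib

/-!
Write `t = Tr(U*V)` and `N = card I`. Expanding the Frobenius norm gives
`‖U - cV‖₂² = 2N - 2 Re(c t)` for `|c| = 1`, which is minimal for the phase with `c t = |t|`.
The Choi matrix of `ρ ↦ UρU*` is the rank-one matrix `vec U (vec U)*`, so the same expansion gives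
`‖J(Φ_U) - J(Φ_V)‖₂² = 2N² - 2|t|²`. Hence, with `α = |t|/N ∈ [0, 1]`, `dist(U,V) = √(1 - α)` and
`D(Φ_U, Φ_V) = √(1 - α²)`, and the claim is `√(1 - α) ≤ √(1 - α²) ≤ √2 · √(1 - α)`.
-/

open Matrix

/-- The Choi matrix `J(Φ) = ∑_{a,b} Φ(|a⟩⟨b|) ⊗ |a⟩⟨b|`. -/
noncomputable def choi {I : Type*} [Fintype I] [DecidableEq I]
    (Φ : Matrix I I ℂ → Matrix I I ℂ) : Matrix (I × I) (I × I) ℂ :=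
  Matrix.of fun p q => Φ (Matrix.single p.2 q.2 1) p.1 q.1

/-- The Frobenius norm of a matrix. -/
noncomputable def frob {I J : Type*} [Fintype I] [Fintype J]
    (A : Matrix I J ℂ) : ℝ :=
  Real.sqrt (∑ i, ∑ j, ‖A i j‖ ^ 2)

/-- `dist(U,V) = min_{θ ∈ [0,2π)} ‖U − e^{iθ}V‖₂ / √(2N)`. -/
noncomputable def unitaryDist {I : Type*} [Fintype I] (N : ℝ)
    (U V : Matrix I I ℂ) : ℝ :=
  (Real.sqrt (2 * N))⁻¹ *
    sInf ((fun θ : ℝ => frob (U - Complex.exp (θ * Complex.I) • V)) ''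
      Set.Ico 0 (2 * Real.pi))

/-- `D(Φ,Ψ) = ‖J(Φ) − J(Ψ)‖₂ / (N√2)`. -/
noncomputable def channelDist {I : Type*} [Fintype I] [DecidableEq I] (N : ℝ)
    (Φ Ψ : Matrix I I ℂ → Matrix I I ℂ) : ℝ :=
  (N * Real.sqrt 2)⁻¹ * frob (choi Φ - choi Ψ)

open ComplexConjugate

section Polarization

variable {ι : Type*} [Fintype ι]

theorem sum_norm_sub_sq (a b : ι → ℂ) :
    ∑ i, ‖a i - b i‖ ^ 2 =
      ∑ i, ‖a i‖ ^ 2 + ∑ i, ‖b i‖ ^ 2 - 2 * (∑ i, conj (a i) * b i).re := by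
  have h : ∀ i, ‖a i - b i‖ ^ 2 = ‖a i‖ ^ 2 + ‖b i‖ ^ 2 - 2 * (conj (a i) * b i).re := by
    intro i
    rw [Complex.sq_norm, Complex.sq_norm, Complex.sq_norm, Complex.normSq_sub,
      ← Complex.conj_re, map_mul, Complex.conj_conj, mul_comm]
  simp only [h, Finset.sum_sub_distrib, Finset.sum_add_distrib, Complex.re_sum, Finset.mul_sum]

theorem sum_norm_sub_mul_sq (x y : ι → ℂ) {c : ℂ} (hc : ‖c‖ = 1) :
    ∑ i, ‖x i - c * y i‖ ^ 2 =
      ∑ i, ‖x i‖ ^ 2 + ∑ i, ‖y i‖ ^ 2 - 2 * (c * ∑ i, conj (x i) * y i).re := by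
  rw [sum_norm_sub_sq]
  simp only [norm_mul, hc, one_mul, Finset.mul_sum, mul_left_comm c]

theorem sum_norm_outer_sub_outer_sq (x y : ι → ℂ) :
    ∑ p : ι × ι, ‖x p.1 * conj (x p.2) - y p.1 * conj (y p.2)‖ ^ 2 =
      (∑ i, ‖x i‖ ^ 2) ^ 2 + (∑ i, ‖y i‖ ^ 2) ^ 2 - 2 * ‖∑ i, conj (x i) * y i‖ ^ 2 := by
  have hnorm : ∀ z : ι → ℂ, ∑ p : ι × ι, ‖z p.1 * conj (z p.2)‖ ^ 2 = (∑ i, ‖z i‖ ^ 2) ^ 2 := by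
    intro z
    simp only [Fintype.sum_prod_type, norm_mul, Complex.norm_conj, mul_pow, sq (Finset.sum _ _),
      Finset.sum_mul_sum]
  have hinner : ∑ p : ι × ι, conj (x p.1 * conj (x p.2)) * (y p.1 * conj (y p.2)) =
      (∑ i, conj (x i) * y i) * conj (∑ i, conj (x i) * y i) := by
    simp only [Fintype.sum_prod_type, map_sum, map_mul, Complex.conj_conj, Finset.sum_mul_sum]
    exact Finset.sum_congr rfl fun i _ => Finset.sum_congr rfl fun j _ => by ring
  rw [sum_norm_sub_sq, hnorm, hnorm, hinner, Complex.mul_conj, Complex.ofReal_re,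
    Complex.normSq_eq_norm_sq]

end Polarization

section Frobenius

variable {I J : Type*} [Fintype I] [Fintype J]

theorem frob_nonneg (A : Matrix I J ℂ) : 0 ≤ frob A := Real.sqrt_nonneg _

theorem frob_sq (A : Matrix I J ℂ) : frob A ^ 2 = ∑ p : I × J, ‖A p.1 p.2‖ ^ 2 := by
  rw [frob, Real.sq_sqrt (by positivity), Fintype.sum_prod_type]

theorem trace_conjTranspose_mul_eq_sum (A B : Matrix I J ℂ) :
    trace (Aᴴ * B) = ∑ p : I × J, conj (A p.1 p.2) * B p.1 p.2 := by
  simp only [trace, diag, mul_apply, conjTranspose_apply, Fintype.sum_prod_type, Complex.star_def]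
  exact Finset.sum_comm

theorem frob_sub_smul_sq (A B : Matrix I J ℂ) {c : ℂ} (hc : ‖c‖ = 1) :
    frob (A - c • B) ^ 2 = frob A ^ 2 + frob B ^ 2 - 2 * (c * trace (Aᴴ * B)).re := by
  simp only [frob_sq, trace_conjTranspose_mul_eq_sum, Matrix.sub_apply, Matrix.smul_apply, smul_eq_mul]
  exact sum_norm_sub_mul_sq _ _ hc

theorem frob_sq_of_unitary [DecidableEq I] {U : Matrix I I ℂ} (hU : Uᴴ * U = 1) :
    frob U ^ 2 = Fintype.card I := by
  have h := trace_conjTranspose_mul_eq_sum U U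
  rw [hU, trace_one] at h
  simp only [Complex.conj_mul'] at h
  rw [frob_sq]
  exact_mod_cast h.symm

end Frobenius

theorem exists_mem_Ico_exp_mul_I_mul_eq_norm (t : ℂ) :
    ∃ θ ∈ Set.Ico 0 (2 * Real.pi), Complex.exp (θ * Complex.I) * t = ‖t‖ := by
  have hper : Function.Periodic (fun θ : ℝ => Complex.exp (θ * Complex.I)) (2 * Real.pi) :=
    fun θ => by push_cast; exact Complex.exp_mul_I_periodic θ
  obtain ⟨θ, hθ, h⟩ := hper.exists_mem_Ico₀ Real.two_pi_pos (-t.arg)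
  refine ⟨θ, hθ, ?_⟩
  calc Complex.exp (θ * Complex.I) * t
      = Complex.exp (↑(-t.arg) * Complex.I) * (‖t‖ * Complex.exp (t.arg * Complex.I)) := by
        rw [← h, Complex.norm_mul_exp_arg_mul_I]
    _ = ‖t‖ := by
        rw [mul_left_comm, ← Complex.exp_add]
        push_cast
        simp

section Unitary

variable {I : Type*} [Fintype I] [DecidableEq I] {U V : Matrix I I ℂ}

theorem frob_sub_exp_smul_sq (hU : Uᴴ * U = 1) (hV : Vᴴ * V = 1) (θ : ℝ) :
    frob (U - Complex.exp (θ * Complex.I) • V) ^ 2 =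
      2 * Fintype.card I - 2 * (Complex.exp (θ * Complex.I) * trace (Uᴴ * V)).re := by
  rw [frob_sub_smul_sq _ _ (Complex.norm_exp_ofReal_mul_I θ), frob_sq_of_unitary hU,
    frob_sq_of_unitary hV]
  ring

theorem norm_trace_conjTranspose_mul_le (hU : Uᴴ * U = 1) (hV : Vᴴ * V = 1) :
    ‖trace (Uᴴ * V)‖ ≤ Fintype.card I := by
  -- `‖U - cV‖₂² ≥ 0` at the phase `c` with `c t = |t|`
  obtain ⟨θ, -, hθ⟩ := exists_mem_Ico_exp_mul_I_mul_eq_norm (trace (Uᴴ * V))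
  have h := frob_sub_exp_smul_sq hU hV θ
  rw [hθ, Complex.ofReal_re] at h
  nlinarith [sq_nonneg (frob (U - Complex.exp (θ * Complex.I) • V))]

theorem sInf_frob_sub_exp_smul (hU : Uᴴ * U = 1) (hV : Vᴴ * V = 1) :
    sInf ((fun θ : ℝ => frob (U - Complex.exp (θ * Complex.I) • V)) ''
        Set.Ico 0 (2 * Real.pi)) =
      √(2 * Fintype.card I - 2 * ‖trace (Uᴴ * V)‖) := by
  have hfrob : ∀ θ : ℝ, frob (U - Complex.exp (θ * Complex.I) • V) =
      √(2 * Fintype.card I - 2 * (Complex.exp (θ * Complex.I) * trace (Uᴴ * V)).re) := by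
    intro θ
    rw [← frob_sub_exp_smul_sq hU hV, Real.sqrt_sq (frob_nonneg _)]
  refine IsLeast.csInf_eq ⟨?_, ?_⟩
  · obtain ⟨θ, hθ, h⟩ := exists_mem_Ico_exp_mul_I_mul_eq_norm (trace (Uᴴ * V))
    exact ⟨θ, hθ, by dsimp only; rw [hfrob, h, Complex.ofReal_re]⟩
  · rintro _ ⟨θ, -, rfl⟩
    dsimp only
    rw [hfrob]
    gcongr
    calc (Complex.exp (θ * Complex.I) * trace (Uᴴ * V)).re
        ≤ ‖Complex.exp (θ * Complex.I) * trace (Uᴴ * V)‖ := Complex.re_le_norm _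
      _ = ‖trace (Uᴴ * V)‖ := by rw [norm_mul, Complex.norm_exp_ofReal_mul_I, one_mul]

theorem unitaryDist_eq [Nonempty I] (hU : Uᴴ * U = 1) (hV : Vᴴ * V = 1) :
    unitaryDist (Fintype.card I) U V = √(1 - ‖trace (Uᴴ * V)‖ / Fintype.card I) := by
  have hN : (0 : ℝ) < Fintype.card I := by exact_mod_cast Fintype.card_pos
  rw [unitaryDist, sInf_frob_sub_exp_smul hU hV, ← Real.sqrt_inv,
    ← Real.sqrt_mul (by positivity)]
  congr 1
  field_simp

theorem choi_conj_apply (U : Matrix I I ℂ) (p q : I × I) :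
    choi (fun ρ => U * ρ * Uᴴ) p q = U p.1 p.2 * conj (U q.1 q.2) := by
  simp [choi, mul_apply, single, conjTranspose_apply, ite_and]

theorem channelDist_eq [Nonempty I] (hU : Uᴴ * U = 1) (hV : Vᴴ * V = 1) :
    channelDist (Fintype.card I) (fun ρ => U * ρ * Uᴴ) (fun ρ => V * ρ * Vᴴ) =
      √(1 - (‖trace (Uᴴ * V)‖ / Fintype.card I) ^ 2) := by
  have hN : (0 : ℝ) < Fintype.card I := by exact_mod_cast Fintype.card_pos
  have hchoi : frob (choi (fun ρ => U * ρ * Uᴴ) - choi (fun ρ => V * ρ * Vᴴ)) ^ 2 =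
      2 * (Fintype.card I : ℝ) ^ 2 - 2 * ‖trace (Uᴴ * V)‖ ^ 2 := by
    have h := sum_norm_outer_sub_outer_sq (fun p : I × I => U p.1 p.2) (fun p => V p.1 p.2)
    simp only [← frob_sq, ← trace_conjTranspose_mul_eq_sum, frob_sq_of_unitary hU,
      frob_sq_of_unitary hV] at h
    simp only [frob_sq, Matrix.sub_apply, choi_conj_apply, h]
    ring
  rw [channelDist, ← Real.sqrt_sq (frob_nonneg _), hchoi,
    ← Real.sqrt_sq (by positivity : (0 : ℝ) ≤ (Fintype.card I * √2)⁻¹),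
    ← Real.sqrt_mul (sq_nonneg _)]
  congr 1
  field_simp
  rw [Real.sq_sqrt zero_le_two]

end Unitary

theorem sqrt_one_sub_le_sqrt_one_sub_sq {α : ℝ} (h₀ : 0 ≤ α) (h₁ : α ≤ 1) :
    √(1 - α) ≤ √(1 - α ^ 2) :=
  Real.sqrt_le_sqrt (by nlinarith)

theorem sqrt_one_sub_sq_le_sqrt_two_mul_sqrt_one_sub (α : ℝ) :
    √(1 - α ^ 2) ≤ √2 * √(1 - α) := by
  rw [← Real.sqrt_mul zero_le_two]
  exact Real.sqrt_le_sqrt (by nlinarith [sq_nonneg (1 - α)])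

theorem stmt_13 {n : ℕ} (U V : Matrix (Fin n → Fin 2) (Fin n → Fin 2) ℂ)
    (hU : Uᴴ * U = 1) (hV : Vᴴ * V = 1) :
    unitaryDist ((2 : ℝ) ^ n) U V ≤
        channelDist ((2 : ℝ) ^ n) (fun ρ => U * ρ * Uᴴ) (fun ρ => V * ρ * Vᴴ) ∧
    channelDist ((2 : ℝ) ^ n) (fun ρ => U * ρ * Uᴴ) (fun ρ => V * ρ * Vᴴ) ≤
        Real.sqrt 2 * unitaryDist ((2 : ℝ) ^ n) U V := by
  have hN : (2 : ℝ) ^ n = Fintype.card (Fin n → Fin 2) := by simp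
  have hN₀ : (0 : ℝ) < Fintype.card (Fin n → Fin 2) := by exact_mod_cast Fintype.card_pos
  have hα₁ : ‖trace (Uᴴ * V)‖ / Fintype.card (Fin n → Fin 2) ≤ 1 :=
    (div_le_one hN₀).mpr (norm_trace_conjTranspose_mul_le hU hV)
  rw [hN, unitaryDist_eq hU hV, channelDist_eq hU hV]
  exact ⟨sqrt_one_sub_le_sqrt_one_sub_sq (by positivity) hα₁,
    sqrt_one_sub_sq_le_sqrt_two_mul_sqrt_one_sub _⟩
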